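/- Let D be an integral domain with quotient field K, A a D-torsion-free D-algebra, and define w^D(A) = {a ∈ A : a = φ(X) for some D-algebra homomorphism φ : Int(D) → A}. If D is weakly polynomially composite (compositums of WPC subalgebras of D-torsion-free algebras are WPC), then w^D(A) equals the largest WPC D-subalgebra of A, namely the compositum of all WPC D-subalgebras of A. -/

import Mathlib

set_option linter.unusedSectionVars false
open Polynomial TensorProduct

variable (D K : Type*) [CommRing D] [IsDomain D] [Field K] [Algebra D K] [IsFractionRing D K]

/-- The ring of integer-valued polynomials `Int(D) ⊆ K[X]`. -/
noncomputable def IntD : Subalgebra D (Polynomial K) :=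
  ⨅ a : D, Subalgebra.comap ((Polynomial.aeval (algebraMap D K a)).restrictScalars D)
    (Algebra.ofId D K).range

theorem mem_IntD {f : Polynomial K} :
    f ∈ IntD D K ↔
      ∀ a : D, ∃ d : D, algebraMap D K d = Polynomial.eval (algebraMap D K a) f := by
  simp [IntD, Algebra.mem_iInf, Subalgebra.mem_comap, Algebra.ofId_apply, Algebra.mem_bot,
    Set.mem_range]

/-- `X` as an element of `Int(D)`. -/
noncomputable def Xint : IntD D K := ⟨Polynomial.X, (mem_IntD D K).mpr fun a => ⟨a, by simp⟩⟩

/-- A `D`-subalgebra `S` of a `D`-torsion-free `D`-algebra `A` is WPC if `f(S) ⊆ S`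
for every integer-valued polynomial `f`, evaluation taking place in `K ⊗[D] A`. -/
def WPCsubA (A : Type*) [CommRing A] [Algebra D A] (S : Subalgebra D A) : Prop :=
  ∀ f ∈ IntD D K, ∀ b ∈ S, ∃ c ∈ S,
    Polynomial.aeval ((1 : K) ⊗ₜ[D] b) f = (1 : K) ⊗ₜ[D] c

/-! Call `a ∈ A` Int(D)-valued if `f(1 ⊗ a) ∈ 1 ⊗ A ⊆ K ⊗ A` for every `f ∈ Int(D)`. Since `A` is
torsion-free, `A → K ⊗ A` is injective, so for such `a` the map `f ↦ f(1 ⊗ a)` is a homomorphism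
`Int(D) → A` sending `X` to `a`. Conversely, for `φ : Int(D) → A` the homomorphisms `f ↦ 1 ⊗ φ f`
and `f ↦ f(1 ⊗ φ X)` into `K ⊗ A` agree, as both are determined by the image of `X` (some nonzero
`d ∈ D` puts `d f` in `D[X]`). The splittings of `f(X + Y)` and `f(XY)` make the Int(D)-valued
elements a subalgebra; it is WPC because Int(D) is closed under composition, and it contains every
WPC subalgebra by definition. -/

theorem comp_mem_IntD {f g : K[X]} (hf : f ∈ IntD D K) (hg : g ∈ IntD D K) :
    f.comp g ∈ IntD D K := by
  rw [mem_IntD] at *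
  intro a
  obtain ⟨d, hd⟩ := hg a
  obtain ⟨e, he⟩ := hf d
  exact ⟨e, by rw [eval_comp, ← hd, he]⟩

theorem includeRight_injective (A : Type*) [CommRing A] [Algebra D A] [NoZeroSMulDivisors D A] :
    Function.Injective (Algebra.TensorProduct.includeRight : A →ₐ[D] K ⊗[D] A) :=
  (IsLocalizedModule.injective_iff_isRegular (nonZeroDivisors D) (TensorProduct.mk D K A 1)).mpr
    fun c => smul_right_injective A (nonZeroDivisors.ne_zero c.2)

theorem IntD.algHom_ext {B : Type*} [CommRing B] [Algebra K B] [Algebra D B]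
    [IsScalarTower D K B] {φ ψ : IntD D K →ₐ[D] B} (h : φ (Xint D K) = ψ (Xint D K)) :
    φ = ψ := by
  ext f
  -- some `d • f` with `d ≠ 0` is a polynomial over `D` in `X`, and `d` is invertible in `B`
  obtain ⟨d, hd0, hd⟩ := IsLocalization.integerNormalization_spec (nonZeroDivisors D) (f : K[X])
  set p := IsLocalization.integerNormalization (nonZeroDivisors D) (f : K[X])
  have hdf : d • f = aeval (Xint D K) p := by
    apply Subtype.ext
    rw [← (IntD D K).val_apply (aeval _ p), ← aeval_algHom_apply, ← aeval_map_algebraMap K,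
      (IntD D K).val_apply, Xint, aeval_X_left_apply, hd, Subalgebra.coe_smul]
  have hsmul : d • φ f = d • ψ f := by
    rw [← map_smul, ← map_smul, hdf, ← aeval_algHom_apply, ← aeval_algHom_apply, h]
  rw [← algebraMap_smul K d (φ f), ← algebraMap_smul K d (ψ f)] at hsmul
  exact (IsFractionRing.to_map_ne_zero_of_mem_nonZeroDivisors hd0).isUnit.smul_left_cancel.mp hsmul

theorem aeval_one_tmul_algHom_Xint {A : Type*} [CommRing A] [Algebra D A]
    (φ : IntD D K →ₐ[D] A) (f : IntD D K) :
    aeval ((1 : K) ⊗ₜ[D] φ (Xint D K)) (f : K[X]) = (1 : K) ⊗ₜ[D] φ f := by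
  have hext : ((aeval ((1 : K) ⊗ₜ[D] φ (Xint D K))).restrictScalars D).comp (IntD D K).val =
      Algebra.TensorProduct.includeRight.comp φ :=
    IntD.algHom_ext D K (by simp [Xint])
  exact DFunLike.congr_fun hext f

def IsIntDValued {A : Type*} [CommRing A] [Algebra D A] (a : A) : Prop :=
  ∀ f ∈ IntD D K, ∃ c : A, aeval ((1 : K) ⊗ₜ[D] a) f = (1 : K) ⊗ₜ[D] c

def HasIntDSplitting (q : MvPolynomial (Fin 2) K) (f : K[X]) : Prop :=
  ∃ (n : ℕ) (g h : Fin n → K[X]), (∀ i, g i ∈ IntD D K ∧ h i ∈ IntD D K) ∧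
    aeval q f = ∑ i, aeval (MvPolynomial.X 0) (g i) * aeval (MvPolynomial.X 1) (h i)

theorem IsIntDValued.aeval_aeval {A : Type*} [CommRing A] [Algebra D A] {a b : A}
    (ha : IsIntDValued D K a) (hb : IsIntDValued D K b) {q : MvPolynomial (Fin 2) K} {f : K[X]}
    (hf : HasIntDSplitting D K q f) :
    ∃ c : A, aeval (MvPolynomial.aeval ![(1 : K) ⊗ₜ[D] a, (1 : K) ⊗ₜ[D] b] q) f =
      (1 : K) ⊗ₜ[D] c := by
  obtain ⟨n, g, h, hgh, hsplit⟩ := hf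
  choose cg hcg using fun i => ha (g i) (hgh i).1
  choose ch hch using fun i => hb (h i) (hgh i).2
  refine ⟨∑ i, cg i * ch i, ?_⟩
  rw [aeval_algHom_apply, hsplit, map_sum, tmul_sum]
  refine Finset.sum_congr rfl fun i _ => ?_
  rw [map_mul, ← aeval_algHom_apply, ← aeval_algHom_apply, MvPolynomial.aeval_X,
    MvPolynomial.aeval_X, Matrix.cons_val_zero, Matrix.cons_val_one, Matrix.cons_val_zero, hcg, hch,
    Algebra.TensorProduct.tmul_mul_tmul, one_mul]

theorem IsIntDValued.add {A : Type*} [CommRing A] [Algebra D A]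
    (hadd : ∀ f ∈ IntD D K, HasIntDSplitting D K (MvPolynomial.X 0 + MvPolynomial.X 1) f)
    {a b : A} (ha : IsIntDValued D K a) (hb : IsIntDValued D K b) : IsIntDValued D K (a + b) :=
  fun f hf => by simpa [tmul_add] using ha.aeval_aeval D K hb (hadd f hf)

theorem IsIntDValued.mul {A : Type*} [CommRing A] [Algebra D A]
    (hmul : ∀ f ∈ IntD D K, HasIntDSplitting D K (MvPolynomial.X 0 * MvPolynomial.X 1) f)
    {a b : A} (ha : IsIntDValued D K a) (hb : IsIntDValued D K b) : IsIntDValued D K (a * b) :=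
  fun f hf => by
    simpa [Algebra.TensorProduct.tmul_mul_tmul] using ha.aeval_aeval D K hb (hmul f hf)

theorem isIntDValued_algebraMap {A : Type*} [CommRing A] [Algebra D A] (d : D) :
    IsIntDValued D K (algebraMap D A d) := by
  intro f hf
  obtain ⟨e, he⟩ := (mem_IntD D K).mp hf d
  refine ⟨algebraMap D A e, ?_⟩
  rw [← Algebra.TensorProduct.includeRight_apply, AlgHom.commutes,
    ← Algebra.TensorProduct.includeRight_apply, AlgHom.commutes,
    IsScalarTower.algebraMap_apply D K, IsScalarTower.algebraMap_apply D K (K ⊗[D] A),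
    aeval_algebraMap_apply_eq_algebraMap_eval, he]

theorem exists_algHom_Xint_eq_iff {A : Type*} [CommRing A] [Algebra D A] [NoZeroSMulDivisors D A]
    {a : A} : (∃ φ : IntD D K →ₐ[D] A, φ (Xint D K) = a) ↔ IsIntDValued D K a := by
  constructor
  · rintro ⟨φ, rfl⟩ f hf
    exact ⟨φ ⟨f, hf⟩, aeval_one_tmul_algHom_Xint D K φ ⟨f, hf⟩⟩
  · intro ha
    let ψ : IntD D K →ₐ[D] K ⊗[D] A :=
      ((aeval ((1 : K) ⊗ₜ[D] a)).restrictScalars D).comp (IntD D K).val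
    have hψ : ∀ f, ψ f ∈ (Algebra.TensorProduct.includeRight : A →ₐ[D] K ⊗[D] A).range :=
      fun f => let ⟨c, hc⟩ := ha f f.2; ⟨c, hc.symm⟩
    let e := AlgEquiv.ofInjective _ (includeRight_injective D K A)
    refine ⟨e.symm.toAlgHom.comp (ψ.codRestrict _ hψ), e.injective (Subtype.ext ?_)⟩
    simp [ψ, e, Xint]

section IntDValuedSubalgebra

variable {D K}
variable (hadd : ∀ f ∈ IntD D K, HasIntDSplitting D K (MvPolynomial.X 0 + MvPolynomial.X 1) f)
  (hmul : ∀ f ∈ IntD D K, HasIntDSplitting D K (MvPolynomial.X 0 * MvPolynomial.X 1) f)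
  (A : Type*) [CommRing A] [Algebra D A]

def intDValuedSubalgebra : Subalgebra D A where
  carrier := {a | IsIntDValued D K a}
  add_mem' := IsIntDValued.add D K hadd
  mul_mem' := IsIntDValued.mul D K hmul
  algebraMap_mem' := isIntDValued_algebraMap D K

theorem wpc_intDValuedSubalgebra : WPCsubA D K A (intDValuedSubalgebra hadd hmul A) := by
  intro f hf b hb
  obtain ⟨c, hc⟩ := hb f hf
  refine ⟨c, fun f' hf' => ?_, hc⟩
  rw [← hc, ← aeval_comp]
  exact hb (f'.comp f) (comp_mem_IntD D K hf' hf)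

theorem isGreatest_intDValuedSubalgebra :
    IsGreatest {S : Subalgebra D A | WPCsubA D K A S} (intDValuedSubalgebra hadd hmul A) :=
  ⟨wpc_intDValuedSubalgebra hadd hmul A, fun _ hS b hb f hf =>
    let ⟨c, _, hc⟩ := hS f hf b hb; ⟨c, hc⟩⟩

end IntDValuedSubalgebra

theorem stmt_8
    (hwpc : ∀ f ∈ IntD D K,
      (∃ (n : ℕ) (g h : Fin n → Polynomial K), (∀ i, g i ∈ IntD D K ∧ h i ∈ IntD D K) ∧
        Polynomial.aeval (MvPolynomial.X 0 + MvPolynomial.X 1 : MvPolynomial (Fin 2) K) f =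
          ∑ i, Polynomial.aeval (MvPolynomial.X 0) (g i) *
            Polynomial.aeval (MvPolynomial.X 1) (h i)) ∧
      (∃ (n : ℕ) (g h : Fin n → Polynomial K), (∀ i, g i ∈ IntD D K ∧ h i ∈ IntD D K) ∧
        Polynomial.aeval (MvPolynomial.X 0 * MvPolynomial.X 1 : MvPolynomial (Fin 2) K) f =
          ∑ i, Polynomial.aeval (MvPolynomial.X 0) (g i) *
            Polynomial.aeval (MvPolynomial.X 1) (h i)))
    (A : Type*) [CommRing A] [Algebra D A] [NoZeroSMulDivisors D A] :
    {a : A | ∃ φ : IntD D K →ₐ[D] A, φ (Xint D K) = a} =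
        ↑(sSup {S : Subalgebra D A | WPCsubA D K A S}) ∧
      WPCsubA D K A (sSup {S : Subalgebra D A | WPCsubA D K A S}) := by
  have hgreatest := isGreatest_intDValuedSubalgebra (fun f hf => (hwpc f hf).1)
    (fun f hf => (hwpc f hf).2) A
  rw [hgreatest.csSup_eq]
  exact ⟨Set.ext fun a => exists_algHom_Xint_eq_iff D K, hgreatest.1⟩
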